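/- Let v_1,…,v_M ∈ ℂ^N be unit-norm vectors with M > N. Then Σ_{i,j} |⟨v_i, v_j⟩|² ≥ M²/N. -/

import Mathlib

/-!
Write the vectors in an orthonormal basis as the columns of a matrix `A`, so that the Gram matrix
is `Aᴴ * A` while the frame operator `A * Aᴴ` is a square matrix of size `N = dim E`. The two
have the same Frobenius norm, since `tr ((Aᴴ A)²) = tr ((A Aᴴ)²)`, and the same trace
`∑ ‖vᵢ‖²`. For an `N × N` matrix, Cauchy–Schwarz on the diagonal gives
`(re tr B)² ≤ N ∑ |Bₐₐ|² ≤ N ‖B‖_F²`.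
-/

open scoped InnerProductSpace Matrix
open RCLike Module

namespace Matrix

variable {𝕜 : Type*} [RCLike 𝕜] {m n : Type*} [Fintype m] [Fintype n]

theorem sum_norm_sq_eq_re_trace_mul_conjTranspose (A : Matrix m n 𝕜) :
    ∑ i, ∑ j, ‖A i j‖ ^ 2 = re (A * Aᴴ).trace := by
  simp only [trace, diag, mul_apply, conjTranspose_apply, map_sum, RCLike.star_def,
    RCLike.mul_conj, ← ofReal_pow, ofReal_re]

theorem sum_norm_sq_conjTranspose_mul_self (A : Matrix m n 𝕜) :
    ∑ i, ∑ j, ‖(Aᴴ * A) i j‖ ^ 2 = ∑ a, ∑ b, ‖(A * Aᴴ) a b‖ ^ 2 := by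
  simp only [sum_norm_sq_eq_re_trace_mul_conjTranspose, conjTranspose_mul,
    conjTranspose_conjTranspose, ← Matrix.mul_assoc]
  rw [trace_mul_comm (Aᴴ * A * Aᴴ)]
  simp only [Matrix.mul_assoc]

theorem re_trace_sq_le_card_mul_sum_norm_sq (B : Matrix n n 𝕜) :
    re B.trace ^ 2 ≤ Fintype.card n * ∑ a, ∑ b, ‖B a b‖ ^ 2 := by
  have diag_le (a : n) : re (B a a) ^ 2 ≤ ∑ b, ‖B a b‖ ^ 2 :=
    calc re (B a a) ^ 2 ≤ ‖B a a‖ ^ 2 := sq_le_sq' (neg_le_of_abs_le (abs_re_le_norm _))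
          (le_of_abs_le (abs_re_le_norm _))
      _ ≤ ∑ b, ‖B a b‖ ^ 2 :=
          Finset.single_le_sum (f := fun b => ‖B a b‖ ^ 2) (fun b _ => by positivity)
            (Finset.mem_univ a)
  calc re B.trace ^ 2 = (∑ a, re (B a a)) ^ 2 := by simp only [trace, diag, map_sum]
    _ ≤ Fintype.card n * ∑ a, re (B a a) ^ 2 := sq_sum_le_card_mul_sum_sq
    _ ≤ Fintype.card n * ∑ a, ∑ b, ‖B a b‖ ^ 2 := by gcongr with a; exact diag_le a

end Matrix

theorem re_trace_gram {𝕜 E m : Type*} [RCLike 𝕜] [NormedAddCommGroup E] [InnerProductSpace 𝕜 E]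
    [Fintype m] (v : m → E) : re (Matrix.gram 𝕜 v).trace = ∑ i, ‖v i‖ ^ 2 := by
  simp only [Matrix.trace, Matrix.diag, Matrix.gram_apply, map_sum, inner_self_eq_norm_sq]

theorem sq_sum_norm_sq_le_finrank_mul_sum_norm_sq_inner {𝕜 E m : Type*} [RCLike 𝕜]
    [NormedAddCommGroup E] [InnerProductSpace 𝕜 E] [FiniteDimensional 𝕜 E] [Fintype m]
    (v : m → E) :
    (∑ i, ‖v i‖ ^ 2) ^ 2 ≤ finrank 𝕜 E * ∑ i, ∑ j, ‖⟪v i, v j⟫_𝕜‖ ^ 2 := by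
  let A := Matrix.of fun a i => (stdOrthonormalBasis 𝕜 E).repr (v i) a
  have hgram : Matrix.gram 𝕜 v = Aᴴ * A := Matrix.gram_eq_conjTranspose_mul _ v
  have htrace : ∑ i, ‖v i‖ ^ 2 = re (A * Aᴴ).trace := by
    rw [← re_trace_gram (𝕜 := 𝕜), hgram, Matrix.trace_mul_comm]
  calc (∑ i, ‖v i‖ ^ 2) ^ 2 = re (A * Aᴴ).trace ^ 2 := by rw [htrace]
    _ ≤ finrank 𝕜 E * ∑ a, ∑ b, ‖(A * Aᴴ) a b‖ ^ 2 := by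
        simpa only [Fintype.card_fin] using Matrix.re_trace_sq_le_card_mul_sum_norm_sq (A * Aᴴ)
    _ = finrank 𝕜 E * ∑ i, ∑ j, ‖⟪v i, v j⟫_𝕜‖ ^ 2 := by
        simp only [← Matrix.sum_norm_sq_conjTranspose_mul_self, ← hgram, Matrix.gram_apply]

theorem stmt_8_general (M N : ℕ)
    (v : Fin M → EuclideanSpace ℂ (Fin N)) (hnorm : ∀ i, ‖v i‖ = 1) :
    (M : ℝ) ^ 2 / N ≤ ∑ i : Fin M, ∑ j : Fin M, ‖(⟪v i, v j⟫_ℂ : ℂ)‖ ^ 2 := by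
  have hsum : ∑ i, ‖v i‖ ^ 2 = M := by simp [hnorm]
  have welch := sq_sum_norm_sq_le_finrank_mul_sum_norm_sq_inner (𝕜 := ℂ) v
  rw [hsum, finrank_euclideanSpace_fin] at welch
  exact div_le_of_le_mul₀ (by positivity) (by positivity) (welch.trans_eq (mul_comm _ _))

/-- The Welch bound in sum form: for `M > N` unit-norm vectors in `ℂ^N`,
`∑_{i,j} |⟨v i, v j⟩|² ≥ M²/N`. -/
theorem stmt_8 (M N : ℕ) (hN : 0 < N) (hMN : N < M)
    (v : Fin M → EuclideanSpace ℂ (Fin N)) (hnorm : ∀ i, ‖v i‖ = 1) :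
    (M : ℝ) ^ 2 / N ≤ ∑ i : Fin M, ∑ j : Fin M, ‖(⟪v i, v j⟫_ℂ : ℂ)‖ ^ 2 :=
  stmt_8_general M N v hnorm
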